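/- arXiv:2208.11645 — 2 statements merged into one kernel-verified Lean document; each statement's English description precedes it below -/
import Mathlib

section
/- Fix $n \geq 2$ and $d > 2n-1$, and let $\mathbb{K}$ be an algebraically closed field of characteristic zero. For every form $f$ in the subspace $W \subset \mathbb{K}[x_0,\ldots,x_n]_d$ of forms with vanishing coefficients on $x_0^{d-m}x_1^m$ for $0 \leq m \leq d-1$, the linear span of: (i) all degree-$d$ monomials except $x_0^d, x_0^{d-1}x_1, \ldots, x_0x_1^{d-1}$, and (ii) the polynomials $x_j \cdot \partial f/\partial x_i$ for $0 \leq i,j \leq n$, has codimension at least $d - 1 - (2n-2) > 0$ in $\mathbb{K}[x_0,\ldots,x_n]_d$; in particular it is a proper subspace. -/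
/-!
Let `Φ` read off the coefficients of `x₀^(d-m) x₁^m` for `m < d - 1`. It maps the degree-`d`
forms onto `K^(d-1)` and kills every allowed monomial. It also kills `x_j ∂f/∂x_i` unless
`i ≥ 2` and `j ≤ 1`: for `j ≥ 2` the monomial `x₀^(d-m) x₁^m` is not divisible by `x_j`, and for
`i, j ≤ 1` its coefficient in `x_j ∂f/∂x_i` is a multiple of the coefficient of `f` on some
`x₀^(d-m') x₁^m'` with `m' ≤ d - 1`, which vanishes since `f ∈ W`. Hence the span is mapped into
a space of dimension at most `2(n-1)`, and rank–nullity turns this into the codimension bound.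
-/

open MvPolynomial

namespace Submodule

variable {K M N : Type*} [DivisionRing K] [AddCommGroup M] [Module K M] [AddCommGroup N]
  [Module K N]

theorem finrank_eq_finrank_map_add_finrank_inf_ker (Φ : M →ₗ[K] N) (p : Submodule K M)
    [FiniteDimensional K p] :
    Module.finrank K p
      = Module.finrank K (p.map Φ) + Module.finrank K ↥(p ⊓ LinearMap.ker Φ) := by
  rw [← (Φ.domRestrict p).finrank_range_add_finrank_ker, LinearMap.range_domRestrict,
    ← finrank_map_subtype_eq p, LinearMap.ker_domRestrict, map_comap_subtype]

theorem finrank_add_finrank_map_sub_le (Φ : M →ₗ[K] N) {T V : Submodule K M}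
    [FiniteDimensional K V] (hTV : T ≤ V) :
    Module.finrank K T + (Module.finrank K (V.map Φ) - Module.finrank K (T.map Φ))
      ≤ Module.finrank K V := by
  have : FiniteDimensional K T := finiteDimensional_of_le hTV
  have hker : Module.finrank K ↥(T ⊓ LinearMap.ker Φ)
      ≤ Module.finrank K ↥(V ⊓ LinearMap.ker Φ) :=
    finrank_mono (inf_le_inf_right _ hTV)
  have hmap : Module.finrank K (T.map Φ) ≤ Module.finrank K (V.map Φ) :=
    finrank_mono (map_mono hTV)
  rw [finrank_eq_finrank_map_add_finrank_inf_ker Φ T,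
    finrank_eq_finrank_map_add_finrank_inf_ker Φ V]
  omega

end Submodule

namespace MvPolynomial

variable {σ K : Type*} [Field K] {a b : σ} {d : ℕ}

noncomputable def binaryExponent (a b : σ) (d m : ℕ) : σ →₀ ℕ :=
  Finsupp.single a (d - m) + Finsupp.single b m

theorem binaryExponent_apply_right (hab : a ≠ b) {m : ℕ} : binaryExponent a b d m b = m := by
  simp only [binaryExponent, Finsupp.add_apply, Finsupp.single_eq_of_ne' hab,
    Finsupp.single_eq_same, zero_add]

theorem binaryExponent_apply_of_ne {m : ℕ} {k : σ} (ha : k ≠ a) (hb : k ≠ b) :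
    binaryExponent a b d m k = 0 := by
  simp only [binaryExponent, Finsupp.add_apply, Finsupp.single_eq_of_ne ha,
    Finsupp.single_eq_of_ne hb, add_zero]

theorem binaryExponent_injective (hab : a ≠ b) : Function.Injective (binaryExponent a b d) :=
  fun m m' h => by
    simpa only [binaryExponent_apply_right hab] using DFunLike.congr_fun h b

theorem degree_binaryExponent {m : ℕ} (hm : m ≤ d) : (binaryExponent a b d m).degree = d := by
  simp only [binaryExponent, map_add, Finsupp.degree_single]
  omega

theorem exists_binaryExponent_eq_sub_single_add_single (hab : a ≠ b) {m : ℕ}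
    (hm : m < d - 1) {i j : σ} (hi : i = a ∨ i = b) (hj : j = a ∨ j = b)
    (hjm : binaryExponent a b d m j ≠ 0) :
    ∃ m' ≤ d - 1, binaryExponent a b d m - Finsupp.single j 1 + Finsupp.single i 1
      = binaryExponent a b d m' := by
  classical
  refine ⟨m + (if i = b then 1 else 0) - (if j = b then 1 else 0), by split_ifs <;> omega, ?_⟩
  ext k
  simp only [binaryExponent, Finsupp.coe_add, Finsupp.coe_tsub, Pi.add_apply, Pi.sub_apply,
    Finsupp.single_apply] at hjm ⊢
  split_ifs at hjm ⊢ <;> grind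

theorem coeff_binaryExponent_X_mul_pderiv_eq_zero {R : Type*} [CommSemiring R]
    {f : MvPolynomial σ R} (hab : a ≠ b)
    (hf : ∀ m ≤ d - 1, coeff (binaryExponent a b d m) f = 0) {m : ℕ} (hm : m < d - 1)
    {i j : σ} (hij : j = a ∨ j = b → i = a ∨ i = b) :
    coeff (binaryExponent a b d m) (X j * pderiv i f) = 0 := by
  classical
  rw [coeff_X_mul', coeff_pderiv]
  split_ifs with hjm
  · rw [Finsupp.mem_support_iff] at hjm
    have hj : j = a ∨ j = b := by
      by_contra! h
      exact hjm (binaryExponent_apply_of_ne h.1 h.2)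
    obtain ⟨m', hm', he⟩ :=
      exists_binaryExponent_eq_sub_single_add_single hab hm (hij hj) hj hjm
    rw [he, hf m' hm', zero_mul]
  · rfl

variable (K) in
/-- The coefficient of `x_a x_b^(d-1)` is left out: `x_a ∂f/∂x_b` may hit it even for `f ∈ W`. -/
noncomputable def binaryCoeffs (a b : σ) (d : ℕ) : MvPolynomial σ K →ₗ[K] Fin (d - 1) → K :=
  LinearMap.pi fun m => lcoeff K (binaryExponent a b d m)

instance [Finite σ] : FiniteDimensional K (homogeneousSubmodule σ K d) :=
  Submodule.finiteDimensional_of_le (S₂ := restrictTotalDegree σ K d) fun _ hp =>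
    (mem_restrictTotalDegree _ _ _).mpr ((mem_homogeneousSubmodule _ _).mp hp).totalDegree_le

theorem map_binaryCoeffs_homogeneousSubmodule (hab : a ≠ b) :
    (homogeneousSubmodule σ K d).map (binaryCoeffs K a b d) = ⊤ := by
  classical
  refine Submodule.eq_top_iff'.mpr fun y =>
    ⟨∑ m, y m • monomial (binaryExponent a b d m) 1, ?_, ?_⟩
  · exact Submodule.sum_mem _ fun m _ => Submodule.smul_mem _ _
      (isHomogeneous_monomial _ (degree_binaryExponent (by omega)))
  · funext m
    simp [binaryCoeffs, coeff_monomial, (binaryExponent_injective hab).eq_iff, Fin.val_inj]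

variable [Fintype σ]

/-- The image of the differential of `(A, g) ↦ A • g` at `(1, f)`: the space `W` of forms without
the monomials `x_a^(d-m) x_b^m`, `m ≤ d - 1`, plus the tangent space `𝔤𝔩 • f` of the orbit. -/
noncomputable def tangentSpan (a b : σ) (d : ℕ) (f : MvPolynomial σ K) :
    Submodule K (MvPolynomial σ K) :=
  Submodule.span K
    ({ p | ∃ u : σ →₀ ℕ, (∑ i, u i) = d ∧ (∀ m, m ≤ d - 1 → u ≠ binaryExponent a b d m) ∧
        p = monomial u (1 : K) } ∪
     { p | ∃ i j : σ, p = X j * pderiv i f })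

theorem tangentSpan_le_homogeneousSubmodule {f : MvPolynomial σ K} (hf : f.IsHomogeneous d)
    (hd : d ≠ 0) : tangentSpan a b d f ≤ homogeneousSubmodule σ K d := by
  rw [tangentSpan, Submodule.span_le]
  rintro p (⟨u, hu, -, rfl⟩ | ⟨i, j, rfl⟩)
  · exact isHomogeneous_monomial _ (by rw [Finsupp.degree_eq_sum, hu])
  · have h := (isHomogeneous_X K j).mul (hf.pderiv (i := i))
    rwa [Nat.add_sub_cancel' (Nat.one_le_iff_ne_zero.mpr hd)] at h

theorem map_binaryCoeffs_tangentSpan_le [DecidableEq σ] {f : MvPolynomial σ K} (hab : a ≠ b)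
    (hf : ∀ m ≤ d - 1, coeff (binaryExponent a b d m) f = 0) :
    (tangentSpan a b d f).map (binaryCoeffs K a b d) ≤ Submodule.span K (Set.range
      fun ij : ({a, b}ᶜ : Finset σ) × ({a, b} : Finset σ) =>
        binaryCoeffs K a b d (X (ij.2 : σ) * pderiv (ij.1 : σ) f)) := by
  rw [tangentSpan, Submodule.map_span, Submodule.span_le]
  rintro _ ⟨p, ⟨u, -, hu, rfl⟩ | ⟨i, j, rfl⟩, rfl⟩
  · have h0 : binaryCoeffs K a b d (monomial u 1) = 0 := by
      funext m
      simp only [binaryCoeffs, LinearMap.pi_apply, lcoeff_apply, coeff_monomial,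
        if_neg (hu m (by omega)), Pi.zero_apply]
    rw [SetLike.mem_coe, h0]
    exact Submodule.zero_mem _
  · by_cases hij : i ∈ ({a, b}ᶜ : Finset σ) ∧ j ∈ ({a, b} : Finset σ)
    · exact Submodule.subset_span ⟨(⟨i, hij.1⟩, ⟨j, hij.2⟩), rfl⟩
    · have h0 : binaryCoeffs K a b d (X j * pderiv i f) = 0 := by
        funext m
        refine coeff_binaryExponent_X_mul_pderiv_eq_zero hab hf (by omega) fun hj => ?_
        simp only [Finset.mem_compl, Finset.mem_insert, Finset.mem_singleton, hj,
          and_true] at hij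
        exact not_not.mp hij
      rw [SetLike.mem_coe, h0]
      exact Submodule.zero_mem _

theorem finrank_map_binaryCoeffs_tangentSpan_le {f : MvPolynomial σ K} (hab : a ≠ b)
    (hf : ∀ m ≤ d - 1, coeff (binaryExponent a b d m) f = 0) :
    Module.finrank K ((tangentSpan a b d f).map (binaryCoeffs K a b d))
      ≤ (Fintype.card σ - 2) * 2 := by
  classical
  calc _ ≤ _ := Submodule.finrank_mono (map_binaryCoeffs_tangentSpan_le hab hf)
    _ ≤ _ := finrank_range_le_card _
    _ = _ := by
      rw [Fintype.card_prod, Fintype.card_coe, Fintype.card_coe, Finset.card_compl,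
        Finset.card_pair hab]

theorem finrank_tangentSpan_add_le {f : MvPolynomial σ K} (hab : a ≠ b)
    (hf : f.IsHomogeneous d) (hd : d ≠ 0)
    (hfW : ∀ m ≤ d - 1, coeff (binaryExponent a b d m) f = 0) :
    Module.finrank K (tangentSpan a b d f) + (d - 1 - (Fintype.card σ - 2) * 2)
      ≤ Module.finrank K (homogeneousSubmodule σ K d) := by
  have h := Submodule.finrank_add_finrank_map_sub_le (binaryCoeffs K a b d)
    (tangentSpan_le_homogeneousSubmodule (a := a) (b := b) hf hd)
  rw [map_binaryCoeffs_homogeneousSubmodule hab, finrank_top, Module.finrank_fin_fun] at h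
  have := finrank_map_binaryCoeffs_tangentSpan_le hab hfW
  omega

end MvPolynomial

/-- for `n ≥ 2` and `d > 2n-1`, for EVERY form `f` in the space
`W` of degree-`d` forms with vanishing coefficients on `x₀^(d-m)x₁^m`
(`0 ≤ m ≤ d-1`), the span of (i) all degree-`d` monomials except
`x₀ᵈ, …, x₀x₁^(d-1)` and (ii) the polynomials `xⱼ·∂f/∂xᵢ` is a proper subspace
of the degree-`d` forms, of codimension at least `d - 1 - (2n - 2) > 0`. -/
theorem stmt11 (K : Type*) [Field K]
    (n d : ℕ) (hn : 2 ≤ n) (hd : 2 * n - 1 < d)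
    (f : MvPolynomial (Fin (n + 1)) K) (hf : f.IsHomogeneous d)
    (hfW : ∀ m, m ≤ d - 1 → f.coeff
      (Finsupp.single ⟨0, by omega⟩ (d - m) + Finsupp.single ⟨1, by omega⟩ m) = 0) :
    Submodule.span K
        ({ p | ∃ u : Fin (n + 1) →₀ ℕ, (∑ i, u i) = d ∧
            (∀ m, m ≤ d - 1 →
              u ≠ Finsupp.single ⟨0, by omega⟩ (d - m) + Finsupp.single ⟨1, by omega⟩ m) ∧
            p = monomial u (1 : K) } ∪
         { p | ∃ i j : Fin (n + 1), p = X j * pderiv i f })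
      < homogeneousSubmodule (Fin (n + 1)) K d ∧
    Module.finrank K
        (Submodule.span K
          ({ p | ∃ u : Fin (n + 1) →₀ ℕ, (∑ i, u i) = d ∧
              (∀ m, m ≤ d - 1 →
                u ≠ Finsupp.single ⟨0, by omega⟩ (d - m) + Finsupp.single ⟨1, by omega⟩ m) ∧
              p = monomial u (1 : K) } ∪
           { p | ∃ i j : Fin (n + 1), p = X j * pderiv i f }))
        + (d - 1 - (2 * n - 2))
      ≤ Module.finrank K (homogeneousSubmodule (Fin (n + 1)) K d) := by
  set a : Fin (n + 1) := ⟨0, by omega⟩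
  set b : Fin (n + 1) := ⟨1, by omega⟩
  change tangentSpan a b d f < _ ∧ Module.finrank K (tangentSpan a b d f) + _ ≤ _
  have hab : a ≠ b := by simp [a, b]
  have hle := tangentSpan_le_homogeneousSubmodule (a := a) (b := b) hf (by omega)
  have hcodim := finrank_tangentSpan_add_le hab hf (by omega) hfW
  rw [Fintype.card_fin] at hcodim
  refine ⟨hle.lt_of_ne fun h => ?_, by omega⟩
  rw [h] at hcodim
  omega
end

section
/- Modulo the span of all degree-$d$ monomials other than $x_0^d, x_0^{d-1}x_1, \ldots, x_0x_1^{d-1}$, and modulo $x_0 x_1^{d-1}$: for $f \in W$ (forms whose only $x_0,x_1$-monomial is $x_1^d$) and $2 \leq i \leq n$, one has $x_0 \cdot \partial f/\partial x_i \equiv \sum_{m=1}^{d-1} c_{u(i,m)} x_0^{m+1} x_1^{d-m-1}$ and $x_1 \cdot \partial f/\partial x_i \equiv \sum_{m=2}^{d-1} c_{u(i,m)} x_0^{m} x_1^{d-m}$, where $c_{u(i,m)}$ is the coefficient in $f$ of $x_0^m x_1^{d-m-1} x_i$. -/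
/-!
Both sides are forms of degree `d`, so their difference lies in the span as soon as its
coefficient at every `x₀ᵃ x₁ᵇ` with `a ≥ 2` vanishes (`x₀ x₁ᵈ⁻¹` is in the span anyway).
Since `xᵢ` does not occur in `x₀ᵃ⁻¹ x₁ᵇ`, the coefficient of `x₀ᵃ x₁ᵇ` in `x₀ ∂f/∂xᵢ` is that of
`x₀ᵃ⁻¹ x₁ᵇ xᵢ` in `f`, namely `c_{a-1}`; likewise it is `c_a` in `x₁ ∂f/∂xᵢ` when `b ≥ 1`,
while `x₁ ∂f/∂xᵢ` has no `x₀ᵈ` term.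
-/

open MvPolynomial

namespace MvPolynomial

open Finsupp (single)

variable {σ R : Type*}

section CommSemiring

variable [CommSemiring R]

theorem coeff_add_single_X_mul_pderiv [DecidableEq σ] (f : MvPolynomial σ R) {i : σ} (j : σ)
    {u : σ →₀ ℕ} (hu : u i = 0) :
    coeff (u + single j 1) (X j * pderiv i f) = coeff (u + single i 1) f := by
  rw [add_comm, coeff_X_mul, coeff_pderiv, hu, Nat.cast_zero, zero_add, mul_one]

theorem coeff_X_mul_of_apply_eq_zero (p : MvPolynomial σ R) {j : σ} {u : σ →₀ ℕ}
    (hu : u j = 0) : coeff u (X j * p) = 0 := by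
  classical
  rw [coeff_X_mul', if_neg (Finsupp.notMem_support_iff.mpr hu)]

theorem coeff_sum_smul_monomial_one {ι : Type*} [DecidableEq ι] {g : ι → σ →₀ ℕ}
    (hg : g.Injective) (s : Finset ι) (c : ι → R) (k : ι) :
    coeff (g k) (∑ m ∈ s, c m • monomial (g m) (1 : R)) = if k ∈ s then c k else 0 := by
  classical
  simp [coeff_sum, coeff_monomial, hg.eq_iff]

theorem isHomogeneous_sum_smul_monomial_one {ι : Type*} {g : ι → σ →₀ ℕ} {s : Finset ι}
    {d : ℕ} (hg : ∀ m ∈ s, (g m).degree = d) (c : ι → R) :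
    (∑ m ∈ s, c m • monomial (g m) (1 : R)).IsHomogeneous d :=
  IsHomogeneous.sum _ _ _ fun m hm => by
    rw [smul_monomial, smul_eq_mul, mul_one]
    exact isHomogeneous_monomial _ (hg m hm)

theorem mem_span_monomial_of_isHomogeneous_of_coeff_eq_zero [Fintype σ] {e₀ e₁ : σ} {d : ℕ} (hd : d ≠ 0)
    {p : MvPolynomial σ R} (hp : p.IsHomogeneous d)
    (hcoeff : ∀ a b, a + b = d → 2 ≤ a → coeff (single e₀ a + single e₁ b) p = 0) :
    p ∈ Submodule.span R
      ({q | ∃ u : σ →₀ ℕ, (∑ j, u j) = d ∧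
          (∀ m, m ≤ d - 1 → u ≠ single e₀ (d - m) + single e₁ m) ∧ q = monomial u 1} ∪
        {monomial (single e₀ 1 + single e₁ (d - 1)) 1}) := by
  set v := single e₀ 1 + single e₁ (d - 1)
  have hgen : {q | ∃ u : σ →₀ ℕ, (∑ j, u j) = d ∧
        (∀ m, m ≤ d - 1 → u ≠ single e₀ (d - m) + single e₁ m) ∧ q = monomial u (1 : R)} ∪
      {monomial v 1} = (monomial · 1) '' ({u | (∑ j, u j) = d ∧
        ∀ m, m ≤ d - 1 → u ≠ single e₀ (d - m) + single e₁ m} ∪ {v}) := by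
    ext q
    simp [eq_comm, and_assoc]
  rw [hgen, ← restrictSupport_eq_span, mem_restrictSupport_iff]
  intro u hu
  rw [Finset.mem_coe, mem_support_iff] at hu
  by_cases huv : u = v
  · exact .inr huv
  refine .inl ⟨?_, fun m hm hum => ?_⟩
  · rw [← Finsupp.degree_eq_sum]
    by_contra hdeg
    exact hu (hp.coeff_eq_zero hdeg)
  · have hm' : m ≠ d - 1 := by
      rintro rfl
      exact huv (by rw [hum, Nat.sub_sub_self (by omega)])
    exact hu (hum ▸ hcoeff (d - m) m (by omega) (by omega))

end CommSemiring

section CommRing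

variable [CommRing R] [DecidableEq σ] {e₀ e₁ i : σ}

theorem coeff_X_mul_pderiv_sub_sum_left (h01 : e₀ ≠ e₁) (hi₀ : e₀ ≠ i) (hi₁ : e₁ ≠ i)
    (f : MvPolynomial σ R) {d a b : ℕ} (hab : a + b = d) (ha : 2 ≤ a) :
    coeff (single e₀ a + single e₁ b) (X e₀ * pderiv i f
      - ∑ m ∈ Finset.Icc 1 (d - 1), coeff (single e₀ m + single e₁ (d - m - 1) + single i 1) f •
          monomial (single e₀ (m + 1) + single e₁ (d - m - 1)) (1 : R)) = 0 := by
  obtain ⟨k, rfl⟩ : ∃ k, a = k + 1 := ⟨a - 1, by omega⟩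
  obtain rfl : b = d - k - 1 := by omega
  have hu : (single e₀ k + single e₁ (d - k - 1)) i = 0 := by simp [hi₀, hi₁]
  have hX : coeff (single e₀ (k + 1) + single e₁ (d - k - 1)) (X e₀ * pderiv i f) =
      coeff (single e₀ k + single e₁ (d - k - 1) + single i 1) f := by
    rw [Finsupp.single_add, add_right_comm]
    exact coeff_add_single_X_mul_pderiv f e₀ hu
  have hg : Function.Injective fun m => single e₀ (m + 1) + single e₁ (d - m - 1) :=
    fun m m' h => by simpa [h01.symm] using DFunLike.congr_fun h e₀
  rw [coeff_sub, hX, coeff_sum_smul_monomial_one hg,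
    if_pos (Finset.mem_Icc.mpr ⟨by omega, by omega⟩), sub_self]

theorem coeff_X_mul_pderiv_sub_sum_right (h01 : e₀ ≠ e₁) (hi₀ : e₀ ≠ i) (hi₁ : e₁ ≠ i)
    (f : MvPolynomial σ R) {d a b : ℕ} (hab : a + b = d) (ha : 2 ≤ a) :
    coeff (single e₀ a + single e₁ b) (X e₁ * pderiv i f
      - ∑ m ∈ Finset.Icc 2 (d - 1), coeff (single e₀ m + single e₁ (d - m - 1) + single i 1) f •
          monomial (single e₀ m + single e₁ (d - m)) (1 : R)) = 0 := by
  have hg : Function.Injective fun m => single e₀ m + single e₁ (d - m) :=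
    fun m m' h => by simpa [h01.symm] using DFunLike.congr_fun h e₀
  obtain rfl : b = d - a := by omega
  rw [coeff_sub, coeff_sum_smul_monomial_one hg]
  rcases Nat.eq_zero_or_pos (d - a) with hb | hb
  · rw [coeff_X_mul_of_apply_eq_zero _ (by simp [h01.symm, hb]),
      if_neg (by simp only [Finset.mem_Icc]; omega), sub_self]
  obtain ⟨k, hk⟩ : ∃ k, d - a = k + 1 := ⟨d - a - 1, by omega⟩
  have hu : (single e₀ a + single e₁ k) i = 0 := by simp [hi₀, hi₁]
  have hX : coeff (single e₀ a + single e₁ (d - a)) (X e₁ * pderiv i f) =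
      coeff (single e₀ a + single e₁ (d - a - 1) + single i 1) f := by
    rw [hk, Nat.add_sub_cancel, Finsupp.single_add, ← add_assoc]
    exact coeff_add_single_X_mul_pderiv f e₁ hu
  rw [hX, if_pos (Finset.mem_Icc.mpr ⟨ha, by omega⟩), sub_self]

end CommRing

end MvPolynomial

/-- modulo the span of all degree-`d` monomials other than
`x₀ᵈ, x₀^(d-1)x₁, …, x₀x₁^(d-1)`, together with `x₀x₁^(d-1)`, for `f ∈ W`
(only `x₀,x₁`-monomial allowed is `x₁ᵈ`) and `2 ≤ i ≤ n` one has
`x₀·∂f/∂xᵢ ≡ ∑_{m=1}^{d-1} c_{u(i,m)} x₀^(m+1) x₁^(d-m-1)` and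
`x₁·∂f/∂xᵢ ≡ ∑_{m=2}^{d-1} c_{u(i,m)} x₀^m x₁^(d-m)`, where `c_{u(i,m)}` is the
coefficient in `f` of `x₀^m x₁^(d-m-1) xᵢ`. -/
theorem stmt12 (K : Type*) [Field K]
    (n d : ℕ) (hn : 2 ≤ n) (hd : 2 ≤ d)
    (f : MvPolynomial (Fin (n + 1)) K) (hf : f.IsHomogeneous d)
    (i : Fin (n + 1)) (hi : 2 ≤ i.val)
    (c : ℕ → K)
    (hc : ∀ m, c m = f.coeff (Finsupp.single ⟨0, by omega⟩ m
      + Finsupp.single ⟨1, by omega⟩ (d - m - 1) + Finsupp.single i 1))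
    (Modu : Submodule K (MvPolynomial (Fin (n + 1)) K))
    (hModu : Modu = Submodule.span K
      ({ p | ∃ u : Fin (n + 1) →₀ ℕ, (∑ j, u j) = d ∧
          (∀ m, m ≤ d - 1 →
            u ≠ Finsupp.single ⟨0, by omega⟩ (d - m) + Finsupp.single ⟨1, by omega⟩ m) ∧
          p = monomial u (1 : K) } ∪
        { monomial (Finsupp.single ⟨0, by omega⟩ 1 + Finsupp.single ⟨1, by omega⟩ (d - 1)) (1 : K) })) :
    X ⟨0, by omega⟩ * pderiv i f
        - ∑ m ∈ Finset.Icc 1 (d - 1), (c m) •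
            monomial (Finsupp.single (⟨0, by omega⟩ : Fin (n + 1)) (m + 1)
              + Finsupp.single ⟨1, by omega⟩ (d - m - 1)) (1 : K) ∈ Modu ∧
    X ⟨1, by omega⟩ * pderiv i f
        - ∑ m ∈ Finset.Icc 2 (d - 1), (c m) •
            monomial (Finsupp.single (⟨0, by omega⟩ : Fin (n + 1)) m
              + Finsupp.single ⟨1, by omega⟩ (d - m)) (1 : K) ∈ Modu := by
  set e₀ : Fin (n + 1) := ⟨0, by omega⟩
  set e₁ : Fin (n + 1) := ⟨1, by omega⟩
  have h01 : e₀ ≠ e₁ := by simp [e₀, e₁, Fin.ext_iff]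
  have hi₀ : e₀ ≠ i := by simp [e₀, Fin.ext_iff]; omega
  have hi₁ : e₁ ≠ i := by simp [e₁, Fin.ext_iff]; omega
  obtain rfl : c = fun m => f.coeff (Finsupp.single e₀ m + Finsupp.single e₁ (d - m - 1)
      + Finsupp.single i 1) := funext hc
  have hXf : ∀ j, (X j * pderiv i f).IsHomogeneous d := fun j => by
    simpa [show 1 + (d - 1) = d by omega] using (isHomogeneous_X K j).mul hf.pderiv
  have hdeg : ∀ a b, a + b = d → (Finsupp.single e₀ a + Finsupp.single e₁ b).degree = d :=
    fun a b hab => by rw [map_add, Finsupp.degree_single, Finsupp.degree_single, hab]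
  subst hModu
  constructor
  · refine mem_span_monomial_of_isHomogeneous_of_coeff_eq_zero (by omega) ((hXf e₀).sub
      (isHomogeneous_sum_smul_monomial_one (fun m hm => hdeg _ _ ?_) _)) fun a b hab ha =>
      coeff_X_mul_pderiv_sub_sum_left h01 hi₀ hi₁ f hab ha
    rw [Finset.mem_Icc] at hm
    omega
  · refine mem_span_monomial_of_isHomogeneous_of_coeff_eq_zero (by omega) ((hXf e₁).sub
      (isHomogeneous_sum_smul_monomial_one (fun m hm => hdeg _ _ ?_) _)) fun a b hab ha =>
      coeff_X_mul_pderiv_sub_sum_right h01 hi₀ hi₁ f hab ha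
    rw [Finset.mem_Icc] at hm
    omega
end
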